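/- Let χ > 0 and let u : (0,1) → ℝ be nonnegative with log(1+u) ∈ W^{1,2}(0,1) and ∫₀¹ u dx = M. If M < 2/√χ − 1, then there exists a constant C depending only on M and χ such that χ ∫₀¹ u² dx ≤ ∫₀¹ |(log(1+u))_x|² dx + C. -/

import Mathlib

/-!
Put `w = √(1 + u)`, so that `w' = w · (log (1 + u))' / 2` and `∫ w² = 1 + M`. Cauchy–Schwarz gives
`∫ |w'| ≤ √X √(1 + M) / 2` with `X = ∫ |(log (1 + u))'|²`, and `w ≤ 1 + u / 2` gives
`∫ w ≤ 1 + M / 2`; since `w` exceeds its mean by at most `∫ |w'|`, we get `w ≤ K` with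
`K = 1 + M / 2 + √X √(1 + M) / 2`. Then `u² ≤ K² (1 + u)` yields `χ ∫ u² ≤ χ (1 + M) K²`. In the
expansion of the right-hand side the coefficient of `X` is `χ (1 + M)² / 4 < 1`, so Young's
inequality absorbs the term linear in `√X` into `X` at the cost of a constant depending on `M`, `χ`.
-/

open MeasureTheory Set Filter Topology

section Measure

variable {α : Type*} [MeasurableSpace α] {μ : Measure α}

theorem integral_mul_le_sqrt_mul_sqrt {f g : α → ℝ} (hf : MemLp f 2 μ) (hg : MemLp g 2 μ)
    (hf0 : 0 ≤ᵐ[μ] f) (hg0 : 0 ≤ᵐ[μ] g) :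
    ∫ x, f x * g x ∂μ ≤ √(∫ x, f x ^ 2 ∂μ) * √(∫ x, g x ^ 2 ∂μ) := by
  have h := integral_mul_le_Lp_mul_Lq_of_nonneg Real.HolderConjugate.two_two hf0 hg0
    (by simpa using hf) (by simpa using hg)
  simpa [Real.sqrt_eq_rpow] using h

theorem integrable_of_nonneg_of_integrable_sq [IsFiniteMeasure μ] {f : α → ℝ}
    (hf0 : 0 ≤ᵐ[μ] f) (hf : Integrable (fun x => f x ^ 2) μ) : Integrable f μ := by
  have hmeas : AEStronglyMeasurable f μ :=
    (Real.continuous_sqrt.comp_aestronglyMeasurable hf.1).congr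
      (hf0.mono fun x hx => Real.sqrt_sq hx)
  exact ((memLp_two_iff_integrable_sq hmeas).2 hf).integrable one_le_two

theorem setIntegral_sq_le_mul_of_one_add_le {s : Set α} (hs : MeasurableSet s) {u : α → ℝ}
    {K : ℝ} (hu : ∀ x ∈ s, 0 ≤ u x) (huK : ∀ x ∈ s, 1 + u x ≤ K) (hu2 : IntegrableOn (fun x => u x ^ 2) s μ)
    (hu1 : IntegrableOn (fun x => 1 + u x) s μ) :
    ∫ x in s, u x ^ 2 ∂μ ≤ K * ∫ x in s, (1 + u x) ∂μ := by
  rw [← integral_const_mul]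
  refine setIntegral_mono_on hu2 (hu1.const_mul K) hs fun x hx => ?_
  have := hu x hx
  have := huK x hx
  nlinarith

end Measure

theorem aestronglyMeasurable_of_hasDerivAt {f f' : ℝ → ℝ} {s : Set ℝ} (hs : MeasurableSet s)
    (hf : ∀ x ∈ s, HasDerivAt f (f' x) x) : AEStronglyMeasurable f' (volume.restrict s) :=
  (measurable_deriv f).aestronglyMeasurable.congr
    ((ae_restrict_mem hs).mono fun x hx => (hf x hx).deriv)

theorem sub_le_integral_abs_deriv {f f' : ℝ → ℝ} {s : Set ℝ} (hs : s.OrdConnected)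
    (hf : ∀ x ∈ s, HasDerivAt f (f' x) x) (hf' : IntegrableOn f' s) {x y : ℝ}
    (hx : x ∈ s) (hy : y ∈ s) : f x - f y ≤ ∫ t in s, |f' t| := by
  have hyx : uIcc y x ⊆ s := hs.uIcc_subset hy hx
  rw [← intervalIntegral.integral_eq_sub_of_hasDerivAt (fun t ht => hf t (hyx ht))
    ((hf'.mono_set hyx).intervalIntegrable)]
  calc (∫ t in y..x, f' t) ≤ ∫ t in uIoc y x, |f' t| :=
        (le_abs_self _).trans <| by
          simpa only [Real.norm_eq_abs] using
            intervalIntegral.norm_integral_le_integral_norm_uIoc (f := f') (μ := volume)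
    _ ≤ ∫ t in s, |f' t| :=
        setIntegral_mono_set hf'.abs (.of_forall fun _ => abs_nonneg _)
          (uIoc_subset_uIcc.trans hyx).eventuallyLE

theorem le_setAverage_add_integral_abs_deriv {f f' : ℝ → ℝ} {a b : ℝ} (hab : a < b)
    (hf : ∀ x ∈ Ioo a b, HasDerivAt f (f' x) x) (hfi : IntegrableOn f (Ioo a b))
    (hf'i : IntegrableOn f' (Ioo a b)) {x : ℝ} (hx : x ∈ Ioo a b) :
    f x ≤ (⨍ t in Ioo a b, f t) + ∫ t in Ioo a b, |f' t| := by
  obtain ⟨y, hy, hfy⟩ := exists_le_setAverage (by simpa using hab) (by simp) hfi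
  linarith [sub_le_integral_abs_deriv ordConnected_Ioo hf hf'i hx hy]

theorem hasDerivAt_sqrt_one_add_of_log {u : ℝ → ℝ} {x d : ℝ} (hu : ∀ᶠ y in 𝓝 x, 0 < 1 + u y)
    (hd : HasDerivAt (fun y => Real.log (1 + u y)) d x) :
    HasDerivAt (fun y => √(1 + u y)) (d / 2 * √(1 + u x)) x := by
  have hexp : ∀ {z : ℝ}, 0 < z → Real.exp (Real.log z / 2) = √z := fun hz => by
    rw [Real.sqrt_eq_rpow, Real.rpow_def_of_pos hz]; ring_nf
  have h := (hd.div_const 2).exp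
  rw [hexp hu.self_of_nhds, mul_comm] at h
  exact h.congr_of_eventuallyEq (hu.mono fun y hy => (hexp hy).symm)

theorem mul_add_mul_sq_le_sq_add_div {a b t : ℝ} (ha : a < 1) :
    b * t + a * t ^ 2 ≤ t ^ 2 + b ^ 2 / (4 * (1 - a)) := by
  have h : 0 < 1 - a := sub_pos.2 ha
  have key : t ^ 2 + b ^ 2 / (4 * (1 - a)) - (b * t + a * t ^ 2)
      = (1 - a) * (t - b / (2 * (1 - a))) ^ 2 := by field_simp; ring
  rw [← sub_nonneg, key]
  exact mul_nonneg h.le (sq_nonneg _)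

theorem mul_sq_lt_four_of_lt_two_div_sqrt_sub_one {χ M : ℝ} (hχ : 0 < χ) (hM0 : 0 ≤ 1 + M)
    (hM : M < 2 / √χ - 1) : χ * (1 + M) ^ 2 < 4 := by
  have h : (1 + M) * √χ < 2 := by
    rw [← lt_div_iff₀ (Real.sqrt_pos.2 hχ)]; linarith
  calc χ * (1 + M) ^ 2 = ((1 + M) * √χ) ^ 2 := by rw [mul_pow, Real.sq_sqrt hχ.le]; ring
    _ < 2 ^ 2 := pow_lt_pow_left₀ h (by positivity) two_ne_zero
    _ = 4 := by norm_num

section UnitInterval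

variable {u d : ℝ → ℝ}

theorem sqrt_one_add_le_of_hasDerivAt_log (hu : ∀ x ∈ Ioo (0:ℝ) 1, 0 ≤ u x)
    (hd : ∀ x ∈ Ioo (0:ℝ) 1, HasDerivAt (fun y => Real.log (1 + u y)) (d x) x)
    (hu1 : IntegrableOn u (Ioo 0 1)) (hd2 : IntegrableOn (fun x => d x ^ 2) (Ioo 0 1))
    {x : ℝ} (hx : x ∈ Ioo (0:ℝ) 1) :
    √(1 + u x) ≤ 1 + (∫ t in Ioo 0 1, u t) / 2 +
      √(∫ t in Ioo 0 1, d t ^ 2) * √(1 + ∫ t in Ioo 0 1, u t) / 2 := by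
  set w := fun y => √(1 + u y)
  have hw' : ∀ y ∈ Ioo (0:ℝ) 1, HasDerivAt w (d y / 2 * w y) y := fun y hy =>
    hasDerivAt_sqrt_one_add_of_log
      (eventually_of_mem (isOpen_Ioo.mem_nhds hy) fun z hz => by linarith [hu z hz]) (hd y hy)
  have h1u : IntegrableOn (fun t => 1 + u t) (Ioo 0 1) := (integrable_const 1).add hu1
  have hw2 : ∫ t in Ioo 0 1, w t ^ 2 = 1 + ∫ t in Ioo 0 1, u t := by
    rw [setIntegral_congr_fun measurableSet_Ioo fun t ht => Real.sq_sqrt (by linarith [hu t ht]),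
      integral_add (integrable_const 1) hu1]
    simp
  have hwL2 : MemLp w 2 (volume.restrict (Ioo 0 1)) := by
    refine (memLp_two_iff_integrable_sq ?_).2 ?_
    · exact ContinuousOn.aestronglyMeasurable
        (fun y hy => (hw' y hy).continuousAt.continuousWithinAt) measurableSet_Ioo
    · exact h1u.congr <| (ae_restrict_mem measurableSet_Ioo).mono
        fun t ht => (Real.sq_sqrt (by linarith [hu t ht])).symm
  have hdL2 : MemLp d 2 (volume.restrict (Ioo 0 1)) :=
    (memLp_two_iff_integrable_sq (aestronglyMeasurable_of_hasDerivAt measurableSet_Ioo hd)).2 hd2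
  have hw'_int : IntegrableOn (fun t => d t / 2 * w t) (Ioo 0 1) := by
    refine ((hdL2.integrable_mul hwL2).div_const 2).congr (.of_forall fun t => ?_)
    simp only [Pi.mul_apply]; ring
  have hw_avg : ⨍ t in Ioo 0 1, w t ≤ 1 + (∫ t in Ioo 0 1, u t) / 2 := by
    have h1u2 : IntegrableOn (fun t => 1 + u t / 2) (Ioo 0 1) :=
      (integrable_const 1).add (hu1.div_const 2)
    have h := setIntegral_mono_on (hwL2.integrable one_le_two) h1u2 measurableSet_Ioo fun t ht =>
        (Real.sqrt_le_left (by linarith [hu t ht])).2 (by nlinarith [hu t ht])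
    rw [integral_add (integrable_const 1) (hu1.div_const 2), integral_div] at h
    simpa [setAverage_eq] using h
  have hw'_L1 : ∫ t in Ioo 0 1, |d t / 2 * w t| ≤
      √(∫ t in Ioo 0 1, d t ^ 2) * √(1 + ∫ t in Ioo 0 1, u t) / 2 := by
    have h := integral_mul_le_sqrt_mul_sqrt hdL2.norm hwL2 (.of_forall fun t => norm_nonneg (d t))
      (.of_forall fun t => Real.sqrt_nonneg _)
    simp only [Real.norm_eq_abs, sq_abs, hw2] at h
    have habs : ∀ t, |d t / 2 * w t| = |d t| * w t / 2 := fun t => by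
      rw [abs_mul, abs_div, abs_two, abs_of_nonneg (Real.sqrt_nonneg _)]; ring
    simp only [habs, integral_div]
    gcongr
  calc w x ≤ (⨍ t in Ioo 0 1, w t) + ∫ t in Ioo 0 1, |d t / 2 * w t| :=
        le_setAverage_add_integral_abs_deriv zero_lt_one hw' (hwL2.integrable one_le_two)
          hw'_int hx
    _ ≤ _ := by linarith

theorem setIntegral_sq_le_of_hasDerivAt_log (hu : ∀ x ∈ Ioo (0:ℝ) 1, 0 ≤ u x)
    (hd : ∀ x ∈ Ioo (0:ℝ) 1, HasDerivAt (fun y => Real.log (1 + u y)) (d x) x)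
    (hu2 : IntegrableOn (fun x => u x ^ 2) (Ioo 0 1))
    (hd2 : IntegrableOn (fun x => d x ^ 2) (Ioo 0 1)) :
    ∫ t in Ioo 0 1, u t ^ 2 ≤ (1 + (∫ t in Ioo 0 1, u t) / 2 +
      √(∫ t in Ioo 0 1, d t ^ 2) * √(1 + ∫ t in Ioo 0 1, u t) / 2) ^ 2 *
        (1 + ∫ t in Ioo 0 1, u t) := by
  have hu1 : IntegrableOn u (Ioo 0 1) :=
    integrable_of_nonneg_of_integrable_sq ((ae_restrict_mem measurableSet_Ioo).mono hu) hu2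
  have h := setIntegral_sq_le_mul_of_one_add_le measurableSet_Ioo hu
    (fun x hx => (Real.sqrt_le_iff.1 (sqrt_one_add_le_of_hasDerivAt_log hu hd hu1 hd2 hx)).2) hu2
    ((integrable_const 1).add hu1)
  simpa [integral_add (integrable_const 1) hu1] using h

end UnitInterval

/-- If `χ > 0` and `M < 2/√χ − 1`, then there is a constant `C = C(M, χ)` such that for
every nonnegative `u` on `(0,1)` with `log(1+u) ∈ W^{1,2}(0,1)` (weak derivative `d`) and
`∫₀¹ u = M`, one has `χ ∫₀¹ u² ≤ ∫₀¹ |(log(1+u))_x|² + C`. -/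
theorem mass_smallness_L2_bound (χ M : ℝ) (hχ : 0 < χ)
    (hM : M < 2 / Real.sqrt χ - 1) :
    ∃ C : ℝ, ∀ u d : ℝ → ℝ,
      (∀ x ∈ Ioo (0:ℝ) 1, 0 ≤ u x) →
      (∀ x ∈ Ioo (0:ℝ) 1, HasDerivAt (fun y => Real.log (1 + u y)) (d x) x) →
      IntegrableOn (fun x => (u x) ^ 2) (Ioo 0 1) →
      IntegrableOn (fun x => (d x) ^ 2) (Ioo 0 1) →
      (∫ x in (0:ℝ)..1, u x) = M →
      χ * ∫ x in (0:ℝ)..1, (u x) ^ 2 ≤ (∫ x in (0:ℝ)..1, (d x) ^ 2) + C := by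
  set A := 1 + M / 2
  set a := χ * (1 + M) ^ 2 / 4
  set b := χ * (1 + M) * A * √(1 + M)
  refine ⟨χ * (1 + M) * A ^ 2 + b ^ 2 / (4 * (1 - a)), fun u d hu hd hu2 hd2 hM_eq => ?_⟩
  simp only [intervalIntegral.integral_of_le zero_le_one, integral_Ioc_eq_integral_Ioo]
    at hM_eq ⊢
  have hM0 : 0 ≤ M := hM_eq ▸ setIntegral_nonneg measurableSet_Ioo hu
  have ha : a < 1 := by
    simp only [a]
    linarith [mul_sq_lt_four_of_lt_two_div_sqrt_sub_one hχ (by linarith) hM]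
  have hu_sq := setIntegral_sq_le_of_hasDerivAt_log hu hd hu2 hd2
  rw [hM_eq] at hu_sq
  set X := ∫ t in Ioo 0 1, d t ^ 2
  have hX : 0 ≤ X := setIntegral_nonneg measurableSet_Ioo fun t _ => sq_nonneg (d t)
  have hS : √(1 + M) ^ 2 = 1 + M := Real.sq_sqrt (by linarith)
  calc χ * ∫ t in Ioo 0 1, u t ^ 2 ≤ χ * ((A + √X * √(1 + M) / 2) ^ 2 * (1 + M)) := by gcongr
    _ = χ * (1 + M) * A ^ 2 + b * √X + a * √X ^ 2 := by
      linear_combination χ * (1 + M) * √X ^ 2 / 4 * hS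
    _ ≤ χ * (1 + M) * A ^ 2 + (√X ^ 2 + b ^ 2 / (4 * (1 - a))) := by
      linarith [mul_add_mul_sq_le_sq_add_div (b := b) (t := √X) ha]
    _ = X + (χ * (1 + M) * A ^ 2 + b ^ 2 / (4 * (1 - a))) := by rw [Real.sq_sqrt hX]; ring
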